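/- In the λG-calculus, forgetful reduction locally commutes with reduction: if t ▷ s and t →g t', then there exists s' such that t' ▷⁺ s' and s →g⁼ s' (where →g⁼ is the reflexive closure of →g and ▷⁺ the transitive closure of ▷). -/

import Mathlib

namespace LambdaG

/-- Simple types: base types and arrow types. -/
inductive Ty : Type
  | base : ℕ → Ty
  | arr : Ty → Ty → Ty
deriving DecidableEq

/-- The height of a type. -/
def Ty.height : Ty → ℕ
  | .base _ => 0
  | .arr A B => 1 + max A.height B.height

/-- Terms of the λG-calculus: simply typed λ-terms extended with wrappers `⟨t | s⟩`. -/
inductive GTm : Type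
  | var : ℕ → Ty → GTm
  | lam : ℕ → Ty → GTm → GTm
  | app : GTm → GTm → GTm
  | wrap : GTm → GTm → GTm
deriving DecidableEq

/-- Capture-avoiding substitution `t[x^B := s]` (bound variables assumed suitably renamed). -/
def GTm.subst : GTm → ℕ → Ty → GTm → GTm
  | .var y C, x, B, s => if y = x ∧ C = B then s else .var y C
  | .lam y C t, x, B, s =>
      if y = x ∧ C = B then .lam y C t else .lam y C (t.subst x B s)
  | .app t u, x, B, s => .app (t.subst x B s) (u.subst x B s)
  | .wrap t u, x, B, s => .wrap (t.subst x B s) (u.subst x B s)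

/-- `t L`: append the memorized terms of the memory `L` to `t` as wrappers. -/
def GTm.appMem (t : GTm) (L : List GTm) : GTm := L.foldl GTm.wrap t

/-- The (unique) type of a λG-term, if typable.  A wrapper has the type of its body. -/
def GTm.typeof : GTm → Option Ty
  | .var _ A => some A
  | .lam _ A t => (t.typeof).map (Ty.arr A)
  | .app t u =>
      match t.typeof, u.typeof with
      | some (.arr A B), some A' => if A = A' then some B else none
      | _, _ => none
  | .wrap t u =>
      match t.typeof, u.typeof with
      | some A, some _ => some A
      | _, _ => none

/-- Whether a term is an m-abstraction, i.e. of the form `(λx.t)L`. -/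
def GTm.headIsLam : GTm → Bool
  | .lam _ _ _ => true
  | .wrap t _ => t.headIsLam
  | _ => false

/-- The degree of an m-abstraction: the height of its type (`none` for non-m-abstractions). -/
def GTm.mAbsDegree (t : GTm) : Option ℕ :=
  if t.headIsLam then t.typeof.map Ty.height else none

/-- Reduction in the λG-calculus: contextual closure of
`(λx.t)L s →g ⟨t[x := s] | s⟩L`. -/
inductive GStep : GTm → GTm → Prop
  | beta (x : ℕ) (A : Ty) (t : GTm) (L : List GTm) (s : GTm) :
      GStep (GTm.app (GTm.appMem (GTm.lam x A t) L) s)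
            (GTm.appMem (GTm.wrap (t.subst x A s) s) L)
  | lam (x : ℕ) (A : Ty) {t t' : GTm} : GStep t t' →
      GStep (GTm.lam x A t) (GTm.lam x A t')
  | appL {t t' : GTm} (s : GTm) : GStep t t' → GStep (GTm.app t s) (GTm.app t' s)
  | appR (t : GTm) {s s' : GTm} : GStep s s' → GStep (GTm.app t s) (GTm.app t s')
  | wrapL {t t' : GTm} (s : GTm) : GStep t t' → GStep (GTm.wrap t s) (GTm.wrap t' s)
  | wrapR (t : GTm) {s s' : GTm} : GStep s s' → GStep (GTm.wrap t s) (GTm.wrap t s')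

/-- Reduction of degree `d`: contraction of redexes whose m-abstraction has degree `d`. -/
inductive GStepD (d : ℕ) : GTm → GTm → Prop
  | beta (x : ℕ) (A : Ty) (t : GTm) (L : List GTm) (s : GTm)
      (hdeg : (GTm.appMem (GTm.lam x A t) L).mAbsDegree = some d) :
      GStepD d (GTm.app (GTm.appMem (GTm.lam x A t) L) s)
               (GTm.appMem (GTm.wrap (t.subst x A s) s) L)
  | lam (x : ℕ) (A : Ty) {t t' : GTm} : GStepD d t t' →
      GStepD d (GTm.lam x A t) (GTm.lam x A t')
  | appL {t t' : GTm} (s : GTm) : GStepD d t t' → GStepD d (GTm.app t s) (GTm.app t' s)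
  | appR (t : GTm) {s s' : GTm} : GStepD d s s' → GStepD d (GTm.app t s) (GTm.app t s')
  | wrapL {t t' : GTm} (s : GTm) : GStepD d t t' → GStepD d (GTm.wrap t s) (GTm.wrap t' s)
  | wrapR (t : GTm) {s s' : GTm} : GStepD d s s' → GStepD d (GTm.wrap t s) (GTm.wrap t s')

/-- Forgetful reduction: contextual closure of `⟨t | s⟩ ▷ t`. -/
inductive GForget : GTm → GTm → Prop
  | drop (t s : GTm) : GForget (GTm.wrap t s) t
  | lam (x : ℕ) (A : Ty) {t t' : GTm} : GForget t t' →
      GForget (GTm.lam x A t) (GTm.lam x A t')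
  | appL {t t' : GTm} (s : GTm) : GForget t t' → GForget (GTm.app t s) (GTm.app t' s)
  | appR (t : GTm) {s s' : GTm} : GForget s s' → GForget (GTm.app t s) (GTm.app t s')
  | wrapL {t t' : GTm} (s : GTm) : GForget t t' → GForget (GTm.wrap t s) (GTm.wrap t' s)
  | wrapR (t : GTm) {s s' : GTm} : GForget s s' → GForget (GTm.wrap t s) (GTm.wrap t s')

/-- Typing judgments `Γ ⊢ t : A` of the λG-calculus. -/
inductive GHasType : (ℕ → Option Ty) → GTm → Ty → Prop
  | var {Γ : ℕ → Option Ty} {x : ℕ} {A : Ty} :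
      Γ x = some A → GHasType Γ (GTm.var x A) A
  | lam {Γ : ℕ → Option Ty} {x : ℕ} {A : Ty} {t : GTm} {B : Ty} :
      GHasType (Function.update Γ x (some A)) t B →
      GHasType Γ (GTm.lam x A t) (Ty.arr A B)
  | app {Γ : ℕ → Option Ty} {t s : GTm} {A B : Ty} :
      GHasType Γ t (Ty.arr A B) → GHasType Γ s A → GHasType Γ (GTm.app t s) B
  | wrap {Γ : ℕ → Option Ty} {t s : GTm} {A B : Ty} :
      GHasType Γ t A → GHasType Γ s B → GHasType Γ (GTm.wrap t s) A

/-- Decompose an m-abstraction `(λx.t)L` into its abstraction and memory. -/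
def GTm.decomp : GTm → Option ((ℕ × Ty × GTm) × List GTm)
  | .lam x A t => some ((x, A, t), [])
  | .wrap t s => (t.decomp).map (fun p => (p.1, p.2 ++ [s]))
  | _ => none

/-- Simplification of degree `d`: the complete development of all redexes of degree `d`. -/
def GTm.simpD (d : ℕ) : GTm → GTm
  | .var y A => .var y A
  | .lam y A t => .lam y A (t.simpD d)
  | .wrap t s => .wrap (t.simpD d) (s.simpD d)
  | .app t s =>
      if t.mAbsDegree = some d then
        match (t.simpD d).decomp with
        | some ((x, A, b), L) =>
            GTm.appMem (GTm.wrap (b.subst x A (s.simpD d)) (s.simpD d)) L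
        | none => .app (t.simpD d) (s.simpD d)
      else .app (t.simpD d) (s.simpD d)

/-- The max-degree of a term: the maximum degree of its redexes, or `0` if none. -/
def GTm.maxdeg : GTm → ℕ
  | .var _ _ => 0
  | .lam _ _ t => t.maxdeg
  | .wrap t s => max t.maxdeg s.maxdeg
  | .app t s => max (max t.maxdeg s.maxdeg) ((t.mAbsDegree).getD 0)

/-- Iterated simplification `simp_1(⋯ simp_D(t))`. -/
def GTm.simpDown : ℕ → GTm → GTm
  | 0, t => t
  | d + 1, t => GTm.simpDown d (t.simpD (d + 1))

/-- Full simplification: `simpfull(t) = simp_1(simp_2(⋯ simp_D(t)))` where `D = maxdeg t`. -/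
def GTm.simpfull (t : GTm) : GTm := GTm.simpDown t.maxdeg t

/-- The weight of a term: its number of wrappers. -/
def GTm.weight : GTm → ℕ
  | .var _ _ => 0
  | .lam _ _ t => t.weight
  | .app t s => t.weight + s.weight
  | .wrap t s => t.weight + s.weight + 1

/-! Induction on the `→g` step. Steps at disjoint positions commute in one step each, and a
`▷`-step `⟨a | b⟩ ▷ a` is matched by dropping the same wrapper after the `→g` step, which then
either happened inside `a` or is erased along with `b`.
The only genuine critical pairs sit at a root redex `(λx.b)L s₀`. A `▷`-step inside the
m-abstraction `(λx.b)L` leaves an m-abstraction `(λx.b')L'`, and the contractum follows it. A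
`▷`-step `s₀ ▷ s₀'` in the argument has to be replayed at every copy of `s₀` in
`⟨b[x := s₀] | s₀⟩L`; there may be several, and always at least the one in the new wrapper,
so the contractum reaches the other side only in `▷⁺`. -/

open Relation

theorem GTm.appMem_append (t : GTm) (L₁ L₂ : List GTm) :
    t.appMem (L₁ ++ L₂) = (t.appMem L₁).appMem L₂ := by
  simp [GTm.appMem, List.foldl_append]

theorem GForget.appMem {t t' : GTm} (h : GForget t t') (L : List GTm) :
    GForget (t.appMem L) (t'.appMem L) := by
  induction L generalizing t t' with
  | nil => exact h
  | cons m L ih => exact ih (GForget.wrapL m h)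

theorem GForget.subst {b b' : GTm} (h : GForget b b') (x : ℕ) (A : Ty) (s : GTm) :
    GForget (b.subst x A s) (b'.subst x A s) := by
  induction h with
  | drop => exact GForget.drop _ _
  | lam y C h ih =>
    by_cases hc : y = x ∧ C = A
    · simpa only [GTm.subst, if_pos hc] using GForget.lam y C h
    · simpa only [GTm.subst, if_neg hc] using GForget.lam y C ih
  | appL _ _ ih => exact GForget.appL _ ih
  | appR _ _ ih => exact GForget.appR _ ih
  | wrapL _ _ ih => exact GForget.wrapL _ ih
  | wrapR _ _ ih => exact GForget.wrapR _ ih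

theorem GTm.reflTransGen_forget_subst (b : GTm) {s s' : GTm} (h : GForget s s') (x : ℕ)
    (A : Ty) : ReflTransGen GForget (b.subst x A s) (b.subst x A s') := by
  induction b with
  | var y C =>
    by_cases hc : y = x ∧ C = A
    · simpa only [GTm.subst, if_pos hc] using ReflTransGen.single h
    · simp only [GTm.subst, if_neg hc]
      rfl
  | lam y C t ih =>
    by_cases hc : y = x ∧ C = A
    · simp only [GTm.subst, if_pos hc]
      rfl
    · simpa only [GTm.subst, if_neg hc] using
        ReflTransGen.lift (GTm.lam y C) (fun _ _ => GForget.lam y C) _ _ ih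
  | app t u iht ihu =>
    exact (ReflTransGen.lift (GTm.app · _) (fun _ _ => GForget.appL _) _ _ iht).trans
      (ReflTransGen.lift (GTm.app _) (fun _ _ => GForget.appR _) _ _ ihu)
  | wrap t u iht ihu =>
    exact (ReflTransGen.lift (GTm.wrap · _) (fun _ _ => GForget.wrapL _) _ _ iht).trans
      (ReflTransGen.lift (GTm.wrap _) (fun _ _ => GForget.wrapR _) _ _ ihu)

theorem GForget.exists_of_appMem_lam {x : ℕ} {A : Ty} {b : GTm} {L : List GTm} {u : GTm}
    (h : GForget ((GTm.lam x A b).appMem L) u) :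
    ∃ b' L', u = (GTm.lam x A b').appMem L' ∧ ∀ s₀ : GTm,
      TransGen GForget ((GTm.wrap (b.subst x A s₀) s₀).appMem L)
        ((GTm.wrap (b'.subst x A s₀) s₀).appMem L') := by
  induction L using List.reverseRecOn generalizing u with
  | nil =>
    cases h with
    | lam _ _ h => exact ⟨_, [], rfl, fun s₀ => .single (.wrapL _ (h.subst x A s₀))⟩
  | append_singleton L m ih =>
    simp only [GTm.appMem_append] at h ⊢
    cases h with
    | drop => exact ⟨b, L, rfl, fun _ => .single (.drop _ _)⟩
    | wrapL _ h =>
      obtain ⟨b', L', rfl, hL⟩ := ih h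
      refine ⟨b', L' ++ [m], by rw [GTm.appMem_append]; rfl, fun s₀ => ?_⟩
      rw [GTm.appMem_append]
      exact TransGen.lift (GTm.wrap · m) (fun _ _ => GForget.wrapL m) _ _ (hL s₀)
    | @wrapR _ _ m' h =>
      exact ⟨b, L ++ [m'], by rw [GTm.appMem_append]; rfl,
        fun _ => by rw [GTm.appMem_append]; exact .single (.wrapR _ h)⟩

def ForgetJoinable (t' s : GTm) : Prop :=
  ∃ s', TransGen GForget t' s' ∧ (s = s' ∨ GStep s s')

namespace ForgetJoinable

theorem of_forget_of_step {t' s u : GTm} (hf : GForget t' u) (hs : GStep s u) :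
    ForgetJoinable t' s :=
  ⟨u, .single hf, .inr hs⟩

theorem map {t' s : GTm} (f : GTm → GTm) (hf : ∀ a b, GForget a b → GForget (f a) (f b))
    (hs : ∀ a b, GStep a b → GStep (f a) (f b)) (h : ForgetJoinable t' s) :
    ForgetJoinable (f t') (f s) :=
  let ⟨u, hfu, hsu⟩ := h
  ⟨f u, TransGen.lift f hf _ _ hfu, hsu.imp (congrArg f) (hs _ _)⟩

theorem beta {x : ℕ} {A : Ty} {b s₀ s : GTm} {L : List GTm}
    (h : GForget (.app ((GTm.lam x A b).appMem L) s₀) s) :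
    ForgetJoinable ((GTm.wrap (b.subst x A s₀) s₀).appMem L) s := by
  cases h with
  | appL _ h =>
    obtain ⟨b', L', rfl, hL⟩ := h.exists_of_appMem_lam
    exact ⟨_, hL s₀, .inr (.beta x A b' L' s₀)⟩
  | appR _ h =>
    refine ⟨_, TransGen.lift (GTm.appMem · L) (fun _ _ h => GForget.appMem h L) _ _ ?_,
      .inr (.beta x A b L _)⟩
    exact .head' (.wrapR _ h)
      (ReflTransGen.lift (GTm.wrap · _) (fun _ _ => GForget.wrapL _) _ _
        (b.reflTransGen_forget_subst h x A))

end ForgetJoinable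

/-- Local commutation of forgetful reduction with reduction. -/
theorem forget_step_local_commutation {t s t' : GTm}
    (hfs : GForget t s) (hstep : GStep t t') :
    ∃ s', Relation.TransGen GForget t' s' ∧ (s = s' ∨ GStep s s') := by
  show ForgetJoinable t' s
  induction hstep generalizing s with
  | beta => exact .beta hfs
  | lam x A _ ih =>
    cases hfs with
    | lam _ _ h => exact (ih h).map _ (fun _ _ => .lam x A) (fun _ _ => .lam x A)
  | appL u hst ih =>
    cases hfs with
    | appL _ h => exact (ih h).map (GTm.app · u) (fun _ _ => .appL u) (fun _ _ => .appL u)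
    | appR _ h => exact .of_forget_of_step (.appR _ h) (.appL _ hst)
  | appR v hst ih =>
    cases hfs with
    | appL _ h => exact .of_forget_of_step (.appL _ h) (.appR _ hst)
    | appR _ h => exact (ih h).map _ (fun _ _ => .appR v) (fun _ _ => .appR v)
  | wrapL u hst ih =>
    cases hfs with
    | drop => exact .of_forget_of_step (.drop _ _) hst
    | wrapL _ h => exact (ih h).map (GTm.wrap · u) (fun _ _ => .wrapL u) (fun _ _ => .wrapL u)
    | wrapR _ h => exact .of_forget_of_step (.wrapR _ h) (.wrapL _ hst)
  | wrapR v hst ih =>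
    cases hfs with
    | drop => exact ⟨v, .single (.drop _ _), .inl rfl⟩
    | wrapL _ h => exact .of_forget_of_step (.wrapL _ h) (.wrapR _ hst)
    | wrapR _ h => exact (ih h).map _ (fun _ _ => .wrapR v) (fun _ _ => .wrapR v)

end LambdaG
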